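/- Let K be a connected compact metric space, let θ : K → K be a continuous non-constant map, and let T : C(K) → C(K) be the composition operator T(f) = f ∘ θ. Then the distance from T to the compact operators and the distance from T to the weakly compact operators both equal 1: ‖T‖_e = ‖T‖_{e,w} = 1. -/

import Mathlib

/-!
Since `θ` is non-constant and `K` is connected, `t ↦ dist (θ t) (θ p)` takes every value
`r / 2 ^ k` at some `s k`; after passing to a convergent subsequence, tents of disjoint support
around these levels give `x m = ∑_{k ≤ m} (-1) ^ k f_k` with `‖x m‖ ≤ 1` and
`T (x m) (s j) = (-1) ^ j` for `j ≤ m`. For weakly compact `S`, a weak cluster point `u` of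
`S (x m)` is a continuous function with `|u (s j) - (-1) ^ j| ≤ ‖T - S‖`, and the convergence of
`u (s j)` forces `‖T - S‖ ≥ 1`. Compact operators are weakly compact, and `S = 0` attains the
bound since `‖T‖ = 1`.
-/

open Filter Topology Metric Set

/-- A bounded linear operator between normed spaces is weakly compact if the closure,
in the weak topology of the codomain, of the image of the closed unit ball is compact. -/
def IsWeaklyCompactOperator {X Y : Type*} [NormedAddCommGroup X] [NormedSpace ℝ X]
    [NormedAddCommGroup Y] [NormedSpace ℝ Y] (S : X →L[ℝ] Y) : Prop :=
  IsCompact (closure ((toWeakSpace ℝ Y) '' (⇑S '' Metric.closedBall 0 1)))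

section WeaklyCompact

variable {X Y : Type*} [NormedAddCommGroup X] [NormedSpace ℝ X]
  [NormedAddCommGroup Y] [NormedSpace ℝ Y]

theorem IsCompactOperator.isWeaklyCompactOperator {S : X →L[ℝ] Y} (hS : IsCompactOperator S) :
    IsWeaklyCompactOperator S := by
  have hC := (hS.isCompact_closure_image_closedBall 1).image (toWeakSpaceCLM ℝ Y).continuous
  refine hC.of_isClosed_subset isClosed_closure (closure_minimal ?_ hC.isClosed)
  exact image_mono subset_closure

theorem IsWeaklyCompactOperator.exists_mapClusterPt {S : X →L[ℝ] Y}
    (hS : IsWeaklyCompactOperator S) {ι : Type*} {l : Filter ι} [l.NeBot] {x : ι → X}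
    (hx : ∀ i, ‖x i‖ ≤ 1) :
    ∃ w : WeakSpace ℝ Y, MapClusterPt w l fun i => toWeakSpace ℝ Y (S (x i)) := by
  obtain ⟨w, -, hw⟩ := IsCompact.exists_mapClusterPt hS (f := l) <|
    le_principal_iff.2 <| mem_map.2 <| Eventually.of_forall fun i =>
      subset_closure ⟨S (x i), ⟨x i, by simpa using hx i, rfl⟩, rfl⟩
  exact ⟨w, hw⟩

end WeaklyCompact

noncomputable def tent (c w y : ℝ) : ℝ := max 0 (1 - |y - c| / w)

@[fun_prop]
theorem continuous_tent (c w : ℝ) : Continuous (tent c w) := by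
  unfold tent; fun_prop

theorem tent_nonneg (c w y : ℝ) : 0 ≤ tent c w y := le_max_left _ _

theorem tent_le_one {w : ℝ} (hw : 0 < w) (c y : ℝ) : tent c w y ≤ 1 :=
  max_le zero_le_one (by linarith [div_nonneg (abs_nonneg (y - c)) hw.le])

@[simp]
theorem tent_self (c w : ℝ) : tent c w c = 1 := by
  simp [tent]

theorem tent_eq_zero {c w y : ℝ} (hw : 0 < w) (h : w ≤ |y - c|) : tent c w y = 0 :=
  max_eq_left (by linarith [(one_le_div hw).2 h])

theorem lt_of_tent_ne_zero {c w y : ℝ} (hw : 0 < w) (h : tent c w y ≠ 0) : |y - c| < w :=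
  lt_of_not_ge fun h' => h (tent_eq_zero hw h')

section SeparatedTents

variable {c w : ℕ → ℝ} (hw : ∀ k, 0 < w k) (hsep : Pairwise fun j k => w j + w k ≤ |c j - c k|)
include hw hsep

theorem tent_eq_zero_of_tent_ne_zero {j k : ℕ} (hjk : j ≠ k) {y : ℝ}
    (hy : tent (c j) (w j) y ≠ 0) : tent (c k) (w k) y = 0 := by
  refine tent_eq_zero (hw k) ?_
  have := lt_of_tent_ne_zero (hw j) hy
  have := abs_sub_le (c j) y (c k)
  rw [abs_sub_comm (c j) y] at this
  linarith [hsep hjk]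

theorem abs_sum_neg_one_pow_mul_tent_le_one (m : ℕ) (y : ℝ) :
    |∑ k ∈ Finset.range (m + 1), (-1) ^ k * tent (c k) (w k) y| ≤ 1 := by
  by_cases hall : ∀ k ∈ Finset.range (m + 1), tent (c k) (w k) y = 0
  · rw [Finset.sum_eq_zero fun k hk => by rw [hall k hk, mul_zero], abs_zero]
    exact zero_le_one
  push Not at hall
  obtain ⟨k₀, hk₀, hy⟩ := hall
  rw [Finset.sum_eq_single_of_mem k₀ hk₀ fun k _ hk => by
    rw [tent_eq_zero_of_tent_ne_zero hw hsep (Ne.symm hk) hy, mul_zero]]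
  simpa [abs_of_nonneg (tent_nonneg ..)] using tent_le_one (hw k₀) (c k₀) y

theorem sum_neg_one_pow_mul_tent_center {m j : ℕ} (hj : j ≤ m) :
    ∑ k ∈ Finset.range (m + 1), (-1) ^ k * tent (c k) (w k) (c j) = (-1) ^ j := by
  rw [Finset.sum_eq_single_of_mem j (Finset.mem_range.2 (Nat.lt_succ_of_le hj)) fun k _ hk => by
    rw [tent_eq_zero_of_tent_ne_zero hw hsep (Ne.symm hk) (by simp), mul_zero]]
  simp

end SeparatedTents

theorem pairwise_tent_separated_geometric {r : ℝ} (hr : 0 < r) :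
    Pairwise fun j k : ℕ => r / 2 ^ j / 4 + r / 2 ^ k / 4 ≤ |r / 2 ^ j - r / 2 ^ k| := by
  have key : ∀ j k : ℕ, j < k → r / 2 ^ j / 4 + r / 2 ^ k / 4 ≤ r / 2 ^ j - r / 2 ^ k := by
    intro j k hjk
    have hk : r / 2 ^ k ≤ r / 2 ^ j / 2 := by
      rw [div_div, ← pow_succ]
      exact div_le_div_of_nonneg_left hr.le (by positivity) (pow_le_pow_right₀ one_le_two hjk)
    linarith [div_pos hr (pow_pos two_pos j)]
  intro j k hjk
  rcases hjk.lt_or_gt with h | h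
  · exact (key j k h).trans (le_abs_self _)
  · rw [abs_sub_comm, add_comm]
    exact (key k j h).trans (le_abs_self _)

theorem one_le_of_tendsto_of_abs_sub_neg_one_pow_le {z : ℕ → ℝ} {L δ : ℝ}
    (hz : Tendsto z atTop (𝓝 L)) (h : ∀ j, |z j - (-1) ^ j| ≤ δ) : 1 ≤ δ := by
  have hlim : Tendsto (fun j => z j - z (j + 1)) atTop (𝓝 0) := by
    simpa using hz.sub (hz.comp (tendsto_add_atTop_nat 1))
  have hgap : ∀ j, 2 - 2 * δ ≤ |z j - z (j + 1)| := by
    intro j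
    have h₀ := abs_le.1 (h j)
    have h₁ := abs_le.1 (h (j + 1))
    rw [pow_succ] at h₁
    rcases neg_one_pow_eq_or ℝ j with hj | hj <;> rw [hj] at h₀ h₁
    · linarith [le_abs_self (z j - z (j + 1))]
    · linarith [neg_abs_le (z j - z (j + 1))]
  have := ge_of_tendsto hlim.abs (Eventually.of_forall hgap)
  linarith [abs_zero (α := ℝ)]

theorem Icc_dist_subset_range_dist {X M : Type*} [TopologicalSpace X] [PreconnectedSpace X]
    [PseudoMetricSpace M] {f : X → M} (hf : Continuous f) (p q : X) :
    Icc 0 (dist (f q) (f p)) ⊆ range fun t => dist (f t) (f p) := by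
  have := intermediate_value_univ p q (hf.dist (continuous_const (y := f p)))
  rwa [dist_self] at this

theorem norm_compositionOperator {K : Type*} [TopologicalSpace K] [CompactSpace K] [Nonempty K]
    (θ : C(K, K)) (T : C(K, ℝ) →L[ℝ] C(K, ℝ)) (hT : ∀ f : C(K, ℝ), T f = f.comp θ) :
    ‖T‖ = 1 := by
  refine le_antisymm (T.opNorm_le_bound zero_le_one fun f => ?_) ?_
  · rw [hT, one_mul, ContinuousMap.norm_le _ (norm_nonneg f)]
    exact fun t => f.norm_coe_le_norm (θ t)
  · simpa [hT] using T.le_opNorm 1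

section ConnectedCompact

variable {K : Type*} [MetricSpace K] [CompactSpace K] [ConnectedSpace K]

theorem exists_alternating_test_functions (θ : C(K, K)) (hθ : ¬ ∃ c : K, ∀ t : K, θ t = c) :
    ∃ (x : ℕ → C(K, ℝ)) (s : ℕ → K) (s₀ : K), (∀ m, ‖x m‖ ≤ 1) ∧
      Tendsto s atTop (𝓝 s₀) ∧ ∀ m j, j ≤ m → x m (θ (s j)) = (-1) ^ j := by
  obtain ⟨p⟩ : Nonempty K := inferInstance
  obtain ⟨q, hq⟩ : ∃ q, θ q ≠ θ p := by simpa using not_exists.1 hθ (θ p)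
  set r := dist (θ q) (θ p)
  have hr : 0 < r := dist_pos.2 hq
  have hlevel : ∀ k : ℕ, ∃ t, dist (θ t) (θ p) = r / 2 ^ k := fun k =>
    Icc_dist_subset_range_dist θ.continuous p q
      ⟨by positivity, div_le_self hr.le (one_le_pow₀ one_le_two)⟩
  choose s hs using hlevel
  obtain ⟨s₀, ψ, hψ, hlim⟩ := CompactSpace.tendsto_subseq s
  set c : ℕ → ℝ := fun k => r / 2 ^ ψ k
  set w : ℕ → ℝ := fun k => c k / 4
  have hw : ∀ k, 0 < w k := fun k => by positivity
  have hsep : Pairwise fun j k => w j + w k ≤ |c j - c k| :=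
    (pairwise_tent_separated_geometric hr).comp_of_injective hψ.injective
  let x : ℕ → C(K, ℝ) := fun m =>
    ⟨fun t => ∑ k ∈ Finset.range (m + 1), (-1) ^ k * tent (c k) (w k) (dist t (θ p)), by fun_prop⟩
  refine ⟨x, s ∘ ψ, s₀, fun m => ?_, hlim, fun m j hj => ?_⟩
  · exact (ContinuousMap.norm_le _ zero_le_one).2 fun t =>
      abs_sum_neg_one_pow_mul_tent_le_one hw hsep m _
  · change ∑ k ∈ Finset.range (m + 1), _ = _
    rw [Function.comp_apply, hs]
    exact sum_neg_one_pow_mul_tent_center hw hsep hj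

theorem one_le_norm_sub_of_isWeaklyCompactOperator (θ : C(K, K))
    (hθ : ¬ ∃ c : K, ∀ t : K, θ t = c) (T : C(K, ℝ) →L[ℝ] C(K, ℝ))
    (hT : ∀ f : C(K, ℝ), T f = f.comp θ) {S : C(K, ℝ) →L[ℝ] C(K, ℝ)}
    (hS : IsWeaklyCompactOperator S) : 1 ≤ ‖T - S‖ := by
  obtain ⟨x, s, s₀, hx, hs, hxs⟩ := exists_alternating_test_functions θ hθ
  obtain ⟨w, hw⟩ := hS.exists_mapClusterPt (l := atTop) hx
  set u := (toWeakSpace ℝ C(K, ℝ)).symm w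
  have hu : ∀ j, |u (s j) - (-1) ^ j| ≤ ‖T - S‖ := by
    intro j
    have hcl : MapClusterPt (u (s j)) atTop fun m => S (x m) (s j) :=
      hw.continuousAt_comp (WeakBilin.eval_continuous (topDualPairing ℝ C(K, ℝ)).flip
        (ContinuousMap.evalCLM ℝ (s j))).continuousAt
    rw [← Real.dist_eq, ← mem_closedBall]
    refine isClosed_closedBall.mem_of_mapClusterPt hcl ?_
    filter_upwards [eventually_ge_atTop j] with m hm
    have hSx : S (x m) (s j) = (-1) ^ j - (T - S) (x m) (s j) := by
      simp [hT, hxs m j hm]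
    calc dist (S (x m) (s j)) ((-1) ^ j) = ‖(T - S) (x m) (s j)‖ := by
          rw [hSx, dist_eq_norm, sub_sub_cancel_left, norm_neg]
      _ ≤ ‖(T - S) (x m)‖ := (T - S) (x m) |>.norm_coe_le_norm (s j)
      _ ≤ ‖T - S‖ := (T - S).le_of_opNorm_le_of_le le_rfl (hx m) |>.trans_eq (mul_one _)
  exact one_le_of_tendsto_of_abs_sub_neg_one_pow_le ((u.continuous.tendsto s₀).comp hs) hu

end ConnectedCompact

theorem compositionOperator_essentialNorms_eq_one
    {K : Type*} [MetricSpace K] [CompactSpace K] [ConnectedSpace K]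
    (θ : C(K, K)) (hθ : ¬ ∃ c : K, ∀ t : K, θ t = c)
    (T : C(K, ℝ) →L[ℝ] C(K, ℝ)) (hT : ∀ f : C(K, ℝ), T f = f.comp θ) :
    sInf {c : ℝ | ∃ S : C(K, ℝ) →L[ℝ] C(K, ℝ), IsCompactOperator ⇑S ∧ c = ‖T - S‖} = 1 ∧
    sInf {c : ℝ | ∃ S : C(K, ℝ) →L[ℝ] C(K, ℝ), IsWeaklyCompactOperator S ∧ c = ‖T - S‖} = 1 := by
  have hT₁ : ‖T‖ = 1 := norm_compositionOperator θ T hT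
  have hzero : IsCompactOperator ⇑(0 : C(K, ℝ) →L[ℝ] C(K, ℝ)) := isCompactOperator_zero
  have hlower : ∀ S : C(K, ℝ) →L[ℝ] C(K, ℝ), IsWeaklyCompactOperator S → 1 ≤ ‖T - S‖ :=
    fun _ => one_le_norm_sub_of_isWeaklyCompactOperator θ hθ T hT
  constructor <;> refine IsLeast.csInf_eq ⟨⟨0, ?_, by rw [sub_zero, hT₁]⟩, ?_⟩
  · exact hzero
  · rintro _ ⟨S, hS, rfl⟩
    exact hlower S hS.isWeaklyCompactOperator
  · exact hzero.isWeaklyCompactOperator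
  · rintro _ ⟨S, hS, rfl⟩
    exact hlower S hS
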